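/- arXiv:2006.02223 — 3 statements merged into one kernel-verified Lean document; each statement's English description precedes it below -/
import Mathlib

section
/- Let A be an additive category with an additive endofunctor Σ and a class Θ of (n+2)-Σ-sequences satisfying axioms (RN1), (RN2) and (RN3). For every right (n+2)-angle A_0 --f_0--> A_1 --f_1--> A_2 → ⋯ --f_{n-1}--> A_n --f_n--> A_{n+1} --f_{n+1}--> ΣA_0 in Θ, one has f_i ∘ f_{i−1} = 0 for all i = 1, 2, …, n+1; that is, any composition of two consecutive morphisms in a right (n+2)-angle vanishes. -/
open CategoryTheory CategoryTheory.Limits Opposite ZeroObject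

universe v u

/-- A sequence of composable morphisms in `C`, indexed by `ℕ`.
For a complex of length `n+2` we only use the objects `0,…,n+1` and maps `0,…,n`. -/
structure ExSeq (C : Type u) [Category.{v} C] : Type max u v where
  obj : ℕ → C
  map : ∀ i : ℕ, obj i ⟶ obj (i + 1)

/-- A morphism of sequences, where only the components `0,…,n+1` (and the
commutativity of the squares involving the maps `0,…,n`) are relevant. -/
structure ExSeqHom {C : Type u} [Category.{v} C] (n : ℕ) (X Y : ExSeq C) :
    Type max u v where
  hom : ∀ i, X.obj i ⟶ Y.obj i
  comm : ∀ i, i ≤ n → X.map i ≫ hom (i + 1) = hom i ≫ Y.map i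

/-- The data of an `n`-exangulated category: an additive bifunctor
`E : Cᵒᵖ × C ⥤ Ab` together with a predicate singling out the distinguished
`n`-exangles, i.e. the pairs `⟨X, δ⟩` with `s(δ) = [X]`. -/
structure ExData (n : ℕ) (C : Type u) [Category.{v} C] [Preadditive C] :
    Type max u (v + 1) where
  E : Cᵒᵖ ⥤ C ⥤ AddCommGrpCat.{v}
  Dist : ∀ X : ExSeq C, ((E.obj (op (X.obj (n + 1)))).obj (X.obj 0)) → Prop

namespace ExData

variable {n : ℕ} {C : Type u} [Category.{v} C] [Preadditive C] (S : ExData n C)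

/-- `S.Ext Cc A` is the group `E(Cc, A)` of `E`-extensions. -/
abbrev Ext (Cc A : C) : Type v := (S.E.obj (op Cc)).obj A

/-- `a_* δ`, the pushforward of an `E`-extension along `a : A ⟶ A'`. -/
def push {Cc A A' : C} (a : A ⟶ A') (δ : S.Ext Cc A) : S.Ext Cc A' :=
  ((S.E.obj (op Cc)).map a) δ

/-- `c^* δ`, the pullback of an `E`-extension along `c : Cc' ⟶ Cc`. -/
def pull {Cc' Cc A : C} (c : Cc' ⟶ Cc) (δ : S.Ext Cc A) : S.Ext Cc' A :=
  ((S.E.map c.op).app A) δ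

/-- `f` is an inflation if it occurs as the `0`-th differential of a
distinguished `n`-exangle. -/
def IsInflation {A B : C} (f : A ⟶ B) : Prop :=
  ∃ (X : ExSeq C) (δ : S.Ext (X.obj (n + 1)) (X.obj 0)), S.Dist X δ ∧
    ∃ (h0 : X.obj 0 = A) (h1 : X.obj 1 = B),
      X.map 0 = eqToHom h0 ≫ f ≫ eqToHom h1.symm

/-- `f` is a deflation if it occurs as the `n`-th differential of a
distinguished `n`-exangle. -/
def IsDeflation {A B : C} (f : A ⟶ B) : Prop :=
  ∃ (X : ExSeq C) (δ : S.Ext (X.obj (n + 1)) (X.obj 0)), S.Dist X δ ∧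
    ∃ (h0 : X.obj n = A) (h1 : X.obj (n + 1) = B),
      X.map n = eqToHom h0 ≫ f ≫ eqToHom h1.symm

/-- Projective objects. -/
def Proj (P : C) : Prop :=
  ∀ (X : ExSeq C) (δ : S.Ext (X.obj (n + 1)) (X.obj 0)), S.Dist X δ →
    ∀ c : P ⟶ X.obj (n + 1), ∃ b : P ⟶ X.obj n, b ≫ X.map n = c

/-- Injective objects. -/
def Inj (I : C) : Prop :=
  ∀ (X : ExSeq C) (δ : S.Ext (X.obj (n + 1)) (X.obj 0)), S.Dist X δ →
    ∀ c : X.obj 0 ⟶ I, ∃ b : X.obj 1 ⟶ I, X.map 0 ≫ b = c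

/-- `C` has enough projectives. -/
def EnoughProj : Prop :=
  ∀ Cc : C, ∃ (X : ExSeq C) (δ : S.Ext (X.obj (n + 1)) (X.obj 0)),
    S.Dist X δ ∧ X.obj (n + 1) = Cc ∧ ∀ i, 1 ≤ i → i ≤ n → S.Proj (X.obj i)

/-- `C` has enough injectives. -/
def EnoughInj : Prop :=
  ∀ A : C, ∃ (X : ExSeq C) (δ : S.Ext (X.obj (n + 1)) (X.obj 0)),
    S.Dist X δ ∧ X.obj 0 = A ∧ ∀ i, 1 ≤ i → i ≤ n → S.Inj (X.obj i)

end ExData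

section Cone

variable (n : ℕ) {C : Type u} [Category.{v} C] [Preadditive C] [HasBinaryBiproducts C]

/-- `M` is the mapping cone of a morphism `f : X ⟶ Y` of `n`-exangles whose
`0`-th component is (up to the identifications) an identity. -/
structure IsCone {X Y : ExSeq C} (f : ExSeqHom n X Y) (M : ExSeq C) : Prop where
  h0 : M.obj 0 = X.obj 1
  hlast : M.obj (n + 1) = Y.obj (n + 1)
  hmid : ∀ i, i + 1 ≤ n → M.obj (i + 1) = (X.obj (i + 2) ⊞ Y.obj (i + 1))
  map0 : ∀ h : 1 ≤ n, M.map 0 =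
    eqToHom h0 ≫ biprod.lift (-(X.map 1)) (f.hom 1) ≫ eqToHom (hmid 0 h).symm
  mapmid : ∀ i (h : i + 2 ≤ n), M.map (i + 1) =
    eqToHom (hmid i (by omega)) ≫
      biprod.desc (biprod.lift (-(X.map (i + 2))) (f.hom (i + 2)))
        (biprod.lift 0 (Y.map (i + 1))) ≫ eqToHom (hmid (i + 1) h).symm
  maplast : ∀ i (h : i + 1 = n), M.map (i + 1) =
    eqToHom (hmid i (by omega)) ≫ biprod.desc (f.hom (i + 2)) (Y.map (i + 1)) ≫
      eqToHom (show Y.obj (i + 2) = M.obj (i + 2) from by subst h; exact hlast.symm)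

/-- `N` is the mapping cocone of a morphism `g : Y ⟶ X` of `n`-exangles whose
`(n+1)`-st component is (up to the identifications) an identity. -/
structure IsCocone {Y X : ExSeq C} (g : ExSeqHom n Y X) (N : ExSeq C) : Prop where
  h0 : N.obj 0 = Y.obj 0
  hlast : N.obj (n + 1) = X.obj n
  hmid : ∀ i, i + 1 ≤ n → N.obj (i + 1) = (Y.obj (i + 1) ⊞ X.obj i)
  map0 : ∀ h : 1 ≤ n, N.map 0 =
    eqToHom h0 ≫ biprod.lift (-(Y.map 0)) (g.hom 0) ≫ eqToHom (hmid 0 h).symm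
  mapmid : ∀ i (h : i + 2 ≤ n), N.map (i + 1) =
    eqToHom (hmid i (by omega)) ≫
      biprod.desc (biprod.lift (-(Y.map (i + 1))) (g.hom (i + 1)))
        (biprod.lift 0 (X.map i)) ≫ eqToHom (hmid (i + 1) h).symm
  maplast : ∀ i (h : i + 1 = n), N.map (i + 1) =
    eqToHom (hmid i (by omega)) ≫ biprod.desc (g.hom (i + 1)) (X.map i) ≫
      eqToHom (show X.obj (i + 1) = N.obj (i + 2) from by subst h; exact hlast.symm)

end Cone

/-- The axioms (R0), (R1), (R2), (EA1), (EA2), (EA2ᵒᵖ) for the data of an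
`n`-exangulated category, following Herschend–Liu–Nakaoka. -/
structure IsExangulated {n : ℕ} {C : Type u} [Category.{v} C] [Preadditive C]
    [HasBinaryBiproducts C] (S : ExData n C) : Prop where
  /-- `E` is additive in the contravariant variable. -/
  additive_left : S.E.Additive
  /-- `E` is additive in the covariant variable. -/
  additive_right : ∀ X : Cᵒᵖ, (S.E.obj X).Additive
  /-- every `E`-extension admits a realization. -/
  realize : ∀ (A Cc : C) (δ : S.Ext Cc A), ∃ (X : ExSeq C)
    (h0 : X.obj 0 = A) (h1 : X.obj (n + 1) = Cc),
      S.Dist X (S.push (eqToHom h0.symm) (S.pull (eqToHom h1) δ))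
  /-- (R0): morphisms of `E`-extensions lift to morphisms of realizations. -/
  lift : ∀ (X Y : ExSeq C) (δX : S.Ext (X.obj (n + 1)) (X.obj 0))
    (δY : S.Ext (Y.obj (n + 1)) (Y.obj 0)), S.Dist X δX → S.Dist Y δY →
    ∀ (a : X.obj 0 ⟶ Y.obj 0) (c : X.obj (n + 1) ⟶ Y.obj (n + 1)),
      S.push a δX = S.pull c δY →
      ∃ f : ExSeqHom n X Y, f.hom 0 = a ∧ f.hom (n + 1) = c
  /-- (R1), covariant part, middle. -/
  ex_cov_mid : ∀ (X : ExSeq C) (δ : S.Ext (X.obj (n + 1)) (X.obj 0)), S.Dist X δ →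
    ∀ i, i + 1 ≤ n → ∀ (Z : C) (g : Z ⟶ X.obj (i + 1)),
      (g ≫ X.map (i + 1) = 0 ↔ ∃ h : Z ⟶ X.obj i, h ≫ X.map i = g)
  /-- (R1), covariant part, last position. -/
  ex_cov_last : ∀ (X : ExSeq C) (δ : S.Ext (X.obj (n + 1)) (X.obj 0)), S.Dist X δ →
    ∀ (Z : C) (g : Z ⟶ X.obj (n + 1)),
      (S.pull g δ = 0 ↔ ∃ h : Z ⟶ X.obj n, h ≫ X.map n = g)
  /-- (R1), contravariant part, middle. -/
  ex_con_mid : ∀ (X : ExSeq C) (δ : S.Ext (X.obj (n + 1)) (X.obj 0)), S.Dist X δ →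
    ∀ i, i + 1 ≤ n → ∀ (Z : C) (g : X.obj (i + 1) ⟶ Z),
      (X.map i ≫ g = 0 ↔ ∃ h : X.obj (i + 2) ⟶ Z, X.map (i + 1) ≫ h = g)
  /-- (R1), contravariant part, last position. -/
  ex_con_last : ∀ (X : ExSeq C) (δ : S.Ext (X.obj (n + 1)) (X.obj 0)), S.Dist X δ →
    ∀ (Z : C) (g : X.obj 0 ⟶ Z),
      (S.push g δ = 0 ↔ ∃ h : X.obj 1 ⟶ Z, X.map 0 ≫ h = g)
  /-- (R2): the trivial complex `A = A → 0 → ⋯ → 0` realizes `0 ∈ E(0, A)`. -/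
  r2 : ∀ A : C, ∃ (X : ExSeq C) (h0 : X.obj 0 = A) (h1 : X.obj 1 = A),
    X.map 0 = eqToHom (h0.trans h1.symm) ∧
    (∀ i, 2 ≤ i → i ≤ n + 1 → IsZero (X.obj i)) ∧ S.Dist X 0
  /-- (R2)ᵒᵖ: the trivial complex `0 → ⋯ → 0 → A = A` realizes `0 ∈ E(A, 0)`. -/
  r2' : ∀ A : C, ∃ (X : ExSeq C) (h0 : X.obj n = A) (h1 : X.obj (n + 1) = A),
    X.map n = eqToHom (h0.trans h1.symm) ∧
    (∀ i, i + 1 ≤ n → IsZero (X.obj i)) ∧ S.Dist X 0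
  /-- (EA1): inflations are closed under composition. -/
  comp_infl : ∀ {A B D : C} (f : A ⟶ B) (g : B ⟶ D),
    S.IsInflation f → S.IsInflation g → S.IsInflation (f ≫ g)
  /-- (EA1): deflations are closed under composition. -/
  comp_defl : ∀ {A B D : C} (f : A ⟶ B) (g : B ⟶ D),
    S.IsDeflation f → S.IsDeflation g → S.IsDeflation (f ≫ g)
  /-- (EA2): good lifts of `(id, c)` exist. -/
  ea2 : ∀ (X Y : ExSeq C) (ρ : S.Ext (Y.obj (n + 1)) (Y.obj 0))
    (hA : X.obj 0 = Y.obj 0) (c : X.obj (n + 1) ⟶ Y.obj (n + 1)),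
    S.Dist Y ρ → S.Dist X (S.push (eqToHom hA.symm) (S.pull c ρ)) →
    ∃ (f : ExSeqHom n X Y) (_ : f.hom 0 = eqToHom hA) (_ : f.hom (n + 1) = c)
      (M : ExSeq C) (hM : IsCone n f M),
      S.Dist M (S.push (eqToHom hM.h0.symm)
        (S.pull (eqToHom hM.hlast) (S.push (eqToHom hA.symm ≫ X.map 0) ρ)))
  /-- (EA2)ᵒᵖ: good lifts of `(a, id)` exist. -/
  ea2op : ∀ (Y X : ExSeq C) (ρ : S.Ext (Y.obj (n + 1)) (Y.obj 0))
    (hC : Y.obj (n + 1) = X.obj (n + 1)) (a : Y.obj 0 ⟶ X.obj 0),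
    S.Dist Y ρ → S.Dist X (S.push a (S.pull (eqToHom hC.symm) ρ)) →
    ∃ (g : ExSeqHom n Y X) (_ : g.hom 0 = a) (_ : g.hom (n + 1) = eqToHom hC)
      (N : ExSeq C) (hN : IsCocone n g N),
      S.Dist N (S.push (eqToHom hN.h0.symm)
        (S.pull (eqToHom hN.hlast ≫ X.map n ≫ eqToHom hC.symm) ρ))
section Quot

variable {C : Type u} [Category.{v} C] [Preadditive C] [HasZeroObject C]
  [HasBinaryBiproducts C]

/-- A (full) additive subcategory of `C`, given by a class of objects closed
under isomorphisms, finite direct sums and containing the zero objects. -/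
structure AddSubcat (C : Type u) [Category.{v} C] [Preadditive C]
    [HasZeroObject C] [HasBinaryBiproducts C] : Type max u v where
  mem : C → Prop
  zero_mem : ∀ Z : C, IsZero Z → mem Z
  iso_mem : ∀ {A B : C}, (A ≅ B) → mem A → mem B
  sum_mem : ∀ {A B : C}, mem A → mem B → mem (A ⊞ B)

variable (𝒳 : AddSubcat C)

/-- `f : A ⟶ B` is `𝒳`-monic. -/
def XMonic {A B : C} (f : A ⟶ B) : Prop :=
  ∀ M : C, 𝒳.mem M → ∀ g : A ⟶ M, ∃ h : B ⟶ M, f ≫ h = g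

/-- `f : A ⟶ B` is `𝒳`-epic. -/
def XEpic {A B : C} (f : A ⟶ B) : Prop :=
  ∀ M : C, 𝒳.mem M → ∀ g : M ⟶ B, ∃ h : M ⟶ A, h ≫ f = g

/-- `f : A ⟶ B` is a left `𝒳`-approximation of `A`. -/
def LeftApprox {A B : C} (f : A ⟶ B) : Prop := 𝒳.mem B ∧ XMonic 𝒳 f

/-- `f : A ⟶ B` is a right `𝒳`-approximation of `B`. -/
def RightApprox {A B : C} (f : A ⟶ B) : Prop := 𝒳.mem A ∧ XEpic 𝒳 f

/-- The ideal `[𝒳](A,B)` of morphisms factoring through an object of `𝒳`. -/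
def homIdeal (A B : C) : AddSubgroup (A ⟶ B) where
  carrier := {f | ∃ M : C, 𝒳.mem M ∧ ∃ (g : A ⟶ M) (h : M ⟶ B), g ≫ h = f}
  zero_mem' := ⟨(0 : C), 𝒳.zero_mem (0 : C) (isZero_zero C), 0, 0, by simp⟩
  add_mem' := by
    rintro f f' ⟨M, hM, g, h, rfl⟩ ⟨M', hM', g', h', rfl⟩
    exact ⟨M ⊞ M', 𝒳.sum_mem hM hM', biprod.lift g g', biprod.desc h h', by simp⟩
  neg_mem' := by
    rintro f ⟨M, hM, g, h, rfl⟩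
    exact ⟨M, hM, -g, h, by simp⟩

lemma homIdeal.comp_right {A B B' : C} {f : A ⟶ B} (hf : f ∈ homIdeal 𝒳 A B)
    (u : B ⟶ B') : f ≫ u ∈ homIdeal 𝒳 A B' := by
  obtain ⟨M, hM, g, h, rfl⟩ := hf
  exact ⟨M, hM, g, h ≫ u, by simp⟩

lemma homIdeal.comp_left {A' A B : C} {f : A ⟶ B} (hf : f ∈ homIdeal 𝒳 A B)
    (u : A' ⟶ A) : u ≫ f ∈ homIdeal 𝒳 A' B := by
  obtain ⟨M, hM, g, h, rfl⟩ := hf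
  exact ⟨M, hM, u ≫ g, h, by simp⟩

/-- The objects of the quotient category `C/𝒳`. -/
@[ext]
structure QuotObj (𝒳 : AddSubcat C) : Type u where
  as : C

/-- The quotient (additive) category `C/𝒳`. -/
instance QuotObj.category : Category.{v} (QuotObj 𝒳) where
  Hom A B := (A.as ⟶ B.as) ⧸ homIdeal 𝒳 A.as B.as
  id A := QuotientAddGroup.mk (𝟙 A.as)
  comp {A B D} f g := Quotient.liftOn₂ f g
    (fun f g => QuotientAddGroup.mk (f ≫ g))
    (by
      intro a₁ a₂ b₁ b₂ h₁ h₂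
      replace h₁ := QuotientAddGroup.leftRel_apply.mp h₁
      replace h₂ := QuotientAddGroup.leftRel_apply.mp h₂
      show QuotientAddGroup.mk (a₁ ≫ a₂) = QuotientAddGroup.mk (b₁ ≫ b₂)
      rw [QuotientAddGroup.eq]
      have heq : -(a₁ ≫ a₂) + b₁ ≫ b₂ =
          (-a₁ + b₁) ≫ a₂ + b₁ ≫ (-a₂ + b₂) := by
        simp only [Preadditive.add_comp, Preadditive.comp_add,
          Preadditive.neg_comp, Preadditive.comp_neg]
        abel
      rw [heq]
      exact (homIdeal 𝒳 _ _).add_mem (homIdeal.comp_right 𝒳 h₁ a₂)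
        (homIdeal.comp_left 𝒳 h₂ b₁))
  id_comp f := by
    induction f using Quotient.inductionOn
    exact congrArg _ (Category.id_comp _)
  comp_id f := by
    induction f using Quotient.inductionOn
    exact congrArg _ (Category.comp_id _)
  assoc f g h := by
    induction f using Quotient.inductionOn
    induction g using Quotient.inductionOn
    induction h using Quotient.inductionOn
    exact congrArg _ (Category.assoc _ _ _)

instance QuotObj.preadditive : Preadditive (QuotObj 𝒳) where
  homGroup A B := inferInstanceAs (AddCommGroup ((A.as ⟶ B.as) ⧸ homIdeal 𝒳 A.as B.as))
  add_comp A B D f f' g := by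
    induction f using Quotient.inductionOn
    induction f' using Quotient.inductionOn
    induction g using Quotient.inductionOn
    exact congrArg _ (Preadditive.add_comp _ _ _ _ _ _)
  comp_add A B D f g g' := by
    induction f using Quotient.inductionOn
    induction g using Quotient.inductionOn
    induction g' using Quotient.inductionOn
    exact congrArg _ (Preadditive.comp_add _ _ _ _ _ _)

/-- The quotient functor `C ⥤ C/𝒳`. -/
def quotFunctor : C ⥤ QuotObj 𝒳 where
  obj A := ⟨A⟩
  map f := QuotientAddGroup.mk f
  map_id _ := rfl
  map_comp _ _ := rfl

end Quot

section QuotBiprod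

variable {C : Type u} [Category.{v} C] [Preadditive C] [HasZeroObject C]
  [HasBinaryBiproducts C] (𝒳 : AddSubcat C)

instance QuotObj.hasBinaryBiproducts : HasBinaryBiproducts (QuotObj 𝒳) := by
  apply HasBinaryBiproducts.mk
  intro A B
  apply HasBinaryBiproduct.mk
  refine ⟨{ pt := ⟨A.as ⊞ B.as⟩
            fst := QuotientAddGroup.mk biprod.fst
            snd := QuotientAddGroup.mk biprod.snd
            inl := QuotientAddGroup.mk biprod.inl
            inr := QuotientAddGroup.mk biprod.inr
            inl_fst := ?_, inl_snd := ?_, inr_fst := ?_, inr_snd := ?_ }, ?_⟩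
  · show QuotientAddGroup.mk (biprod.inl ≫ biprod.fst) =
      QuotientAddGroup.mk (𝟙 A.as)
    rw [biprod.inl_fst]
  · show QuotientAddGroup.mk (biprod.inl ≫ biprod.snd) = _
    rw [biprod.inl_snd]; rfl
  · show QuotientAddGroup.mk (biprod.inr ≫ biprod.fst) = _
    rw [biprod.inr_fst]; rfl
  · show QuotientAddGroup.mk (biprod.inr ≫ biprod.snd) =
      QuotientAddGroup.mk (𝟙 B.as)
    rw [biprod.inr_snd]
  · apply isBinaryBilimitOfTotal
    show QuotientAddGroup.mk (biprod.fst ≫ biprod.inl) +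
        QuotientAddGroup.mk (biprod.snd ≫ biprod.inr) =
      QuotientAddGroup.mk (𝟙 (A.as ⊞ B.as))
    rw [show QuotientAddGroup.mk (biprod.fst ≫ biprod.inl) + QuotientAddGroup.mk (biprod.snd ≫ biprod.inr) = (QuotientAddGroup.mk (biprod.fst ≫ biprod.inl + biprod.snd ≫ biprod.inr) : (⟨A.as ⊞ B.as⟩ : QuotObj 𝒳) ⟶ ⟨A.as ⊞ B.as⟩) from rfl]
    rw [biprod.total]

end QuotBiprod
section NAbelian

variable (n : ℕ) {C : Type u} [Category.{v} C] [Preadditive C]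

/-- `g` is a weak cokernel of `f`. -/
def IsWeakCokernel {A B D : C} (f : A ⟶ B) (g : B ⟶ D) : Prop :=
  f ≫ g = 0 ∧ ∀ (Z : C) (h : B ⟶ Z), f ≫ h = 0 → ∃ p : D ⟶ Z, g ≫ p = h

/-- `f` is a weak kernel of `g`. -/
def IsWeakKernel {A B D : C} (f : A ⟶ B) (g : B ⟶ D) : Prop :=
  f ≫ g = 0 ∧ ∀ (Z : C) (h : Z ⟶ B), h ≫ g = 0 → ∃ p : Z ⟶ A, p ≫ f = h

/-- The sequence `S.obj 1 → ⋯ → S.obj (n+1)` is an `n`-cokernel of `S.map 0`,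
i.e. `0 → (S_{n+1}, B) → ⋯ → (S_1, B) → (S_0, B)` is exact for every `B`. -/
def IsNCokernelOf (S : ExSeq C) : Prop :=
  (∀ i, i + 1 ≤ n → ∀ (Z : C) (h : S.obj (i + 1) ⟶ Z),
    (S.map i ≫ h = 0 ↔ ∃ p : S.obj (i + 2) ⟶ Z, S.map (i + 1) ≫ p = h)) ∧
  (∀ (Z : C) (g : S.obj (n + 1) ⟶ Z), S.map n ≫ g = 0 → g = 0)

/-- The sequence `S.obj 0 → ⋯ → S.obj n` is an `n`-kernel of `S.map n`,
i.e. `0 → (B, S_0) → ⋯ → (B, S_n) → (B, S_{n+1})` is exact for every `B`. -/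
def IsNKernelOf (S : ExSeq C) : Prop :=
  (∀ i, i + 1 ≤ n → ∀ (Z : C) (h : Z ⟶ S.obj (i + 1)),
    (h ≫ S.map (i + 1) = 0 ↔ ∃ p : Z ⟶ S.obj i, p ≫ S.map i = h)) ∧
  (∀ (Z : C) (g : Z ⟶ S.obj 0), g ≫ S.map 0 = 0 → g = 0)

/-- `n`-exact sequences. -/
def IsNExactSeq (S : ExSeq C) : Prop := IsNCokernelOf n S ∧ IsNKernelOf n S

/-- The sequence `S` starts with (a copy of) the morphism `f`. -/
def ExSeq.startsWith (S : ExSeq C) {A B : C} (f : A ⟶ B) : Prop :=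
  ∃ (h0 : S.obj 0 = A) (h1 : S.obj 1 = B), S.map 0 = eqToHom h0 ≫ f ≫ eqToHom h1.symm

/-- The sequence `S` ends (at position `n`) with (a copy of) the morphism `f`. -/
def ExSeq.endsWith (n : ℕ) (S : ExSeq C) {A B : C} (f : A ⟶ B) : Prop :=
  ∃ (h0 : S.obj n = A) (h1 : S.obj (n + 1) = B),
    S.map n = eqToHom h0 ≫ f ≫ eqToHom h1.symm

/-- `n`-abelian category, following Jasso: an additive category with split
idempotents in which every morphism has an `n`-kernel and an `n`-cokernel,
every monomorphism is the `0`-th morphism of an `n`-exact sequence, and every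
epimorphism is the `n`-th morphism of an `n`-exact sequence. -/
structure IsNAbelian (n : ℕ) (D : Type u) [Category.{v} D] [Preadditive D] : Prop where
  hasFiniteBiproducts : HasFiniteBiproducts D
  idemSplit : IsIdempotentComplete D
  hasNCokernels : ∀ {A B : D} (f : A ⟶ B),
    ∃ S : ExSeq D, S.startsWith f ∧ IsNCokernelOf n S
  hasNKernels : ∀ {A B : D} (f : A ⟶ B),
    ∃ S : ExSeq D, S.endsWith n f ∧ IsNKernelOf n S
  monoIsNExact : ∀ {A B : D} (f : A ⟶ B), Mono f →
    ∃ S : ExSeq D, S.startsWith f ∧ IsNExactSeq n S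
  epiIsNExact : ∀ {A B : D} (f : A ⟶ B), Epi f →
    ∃ S : ExSeq D, S.endsWith n f ∧ IsNExactSeq n S

end NAbelian

section ClusterTilting

variable {n : ℕ} {C : Type u} [Category.{v} C] [Preadditive C] [HasZeroObject C]
  [HasBinaryBiproducts C]

/-- A cluster tilting subcategory of an `n`-exangulated category. -/
def ExData.ClusterTilting (S : ExData n C) (𝒳 : AddSubcat C) : Prop :=
  (∀ X X' : C, 𝒳.mem X → 𝒳.mem X' → ∀ δ : S.Ext X X', δ = 0) ∧
  (∀ Cc : C, ∃ (X : ExSeq C) (δ : S.Ext (X.obj (n + 1)) (X.obj 0)),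
    S.Dist X δ ∧ X.obj (n + 1) = Cc ∧ ∀ i, i ≤ n → 𝒳.mem (X.obj i)) ∧
  (∀ A : C, ∃ (X : ExSeq C) (δ : S.Ext (X.obj (n + 1)) (X.obj 0)),
    S.Dist X δ ∧ X.obj 0 = A ∧ ∀ i, 1 ≤ i → i ≤ n + 1 → 𝒳.mem (X.obj i))

end ClusterTilting
section Angulated

variable {C : Type u} [Category.{v} C] [Preadditive C]

/-- An `(n+2)`-`Σ`-sequence `A₀ → A₁ → ⋯ → A_{n+1} → Σ A₀`. -/
structure SgSeq (C : Type u) [Category.{v} C] (Sg : C ⥤ C) (n : ℕ) :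
    Type max u v where
  obj : ℕ → C
  map : ∀ i, obj i ⟶ obj (i + 1)
  ext : obj (n + 1) ⟶ Sg.obj (obj 0)

/-- A morphism of `(n+2)`-`Σ`-sequences. -/
structure SgSeqHom {C : Type u} [Category.{v} C] {Sg : C ⥤ C} {n : ℕ}
    (X Y : SgSeq C Sg n) : Type max u v where
  hom : ∀ i, X.obj i ⟶ Y.obj i
  comm : ∀ i, i ≤ n → X.map i ≫ hom (i + 1) = hom i ≫ Y.map i
  comm_ext : X.ext ≫ Sg.map (hom 0) = hom (n + 1) ≫ Y.ext

variable {Sg : C ⥤ C} {n : ℕ}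

/-- `T` is (equal to) the trivial sequence `0 → A = A → 0 → ⋯ → 0`. -/
def IsTrivialSgSeq (A : C) (T : SgSeq C Sg n) : Prop :=
  IsZero (T.obj 0) ∧
  (∃ (h1 : T.obj 1 = A) (h2 : T.obj 2 = A), T.map 1 = eqToHom (h1.trans h2.symm)) ∧
  (∀ i, 3 ≤ i → i ≤ n + 1 → IsZero (T.obj i))

variable [HasBinaryBiproducts C]

/-- `U` is the direct sum of the sequences `X` and `Y`. -/
def IsBiprodSgSeq (X Y U : SgSeq C Sg n) : Prop :=
  ∃ e : ∀ i, i ≤ n + 1 → U.obj i = (X.obj i ⊞ Y.obj i),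
    (∀ i (h : i + 1 ≤ n + 1), U.map i = eqToHom (e i (by omega)) ≫
      biprod.map (X.map i) (Y.map i) ≫ eqToHom (e (i + 1) h).symm) ∧
    U.ext = eqToHom (e (n + 1) le_rfl) ≫
      biprod.desc (X.ext ≫ Sg.map biprod.inl) (Y.ext ≫ Sg.map biprod.inr) ≫
        eqToHom (congrArg Sg.obj (e 0 (by omega)).symm)

/-- `T` is the left rotation of `X`. -/
def IsRotation (X T : SgSeq C Sg n) : Prop :=
  ∃ (e : ∀ i, i ≤ n → T.obj i = X.obj (i + 1)) (el : T.obj (n + 1) = Sg.obj (X.obj 0)),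
    (∀ i (h : i + 1 ≤ n), T.map i = eqToHom (e i (by omega)) ≫ X.map (i + 1) ≫
      eqToHom (e (i + 1) h).symm) ∧
    (T.map n = eqToHom (e n le_rfl) ≫ X.ext ≫ eqToHom el.symm) ∧
    (T.ext = eqToHom el ≫ (((-1 : ℤ) ^ n) • Sg.map (X.map 0)) ≫
      eqToHom (congrArg Sg.obj (e 0 (by omega)).symm))

/-- The axioms (RN1), (RN2), (RN3) of a right `(n+2)`-angulated category. -/
structure RightAngulatedRN123 (Sg : C ⥤ C) (n : ℕ) (Θ : Set (SgSeq C Sg n)) : Prop where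
  /-- (RN1)(a): `Θ` is closed under isomorphisms. -/
  iso_closed : ∀ (X Y : SgSeq C Sg n) (f : SgSeqHom X Y),
    (∀ i, i ≤ n + 1 → IsIso (f.hom i)) → X ∈ Θ → Y ∈ Θ
  /-- (RN1)(a): `Θ` is closed under direct sums. -/
  sum_closed : ∀ X Y U : SgSeq C Sg n, X ∈ Θ → Y ∈ Θ → IsBiprodSgSeq X Y U → U ∈ Θ
  /-- (RN1)(b): the trivial sequences belong to `Θ`. -/
  trivial_mem : ∀ A : C, ∃ T ∈ Θ, IsTrivialSgSeq A T
  /-- (RN1)(c): every morphism extends to a right `(n+2)`-angle. -/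
  extend : ∀ {A B : C} (f : A ⟶ B), ∃ T ∈ Θ, ∃ (h0 : T.obj 0 = A) (h1 : T.obj 1 = B),
    T.map 0 = eqToHom h0 ≫ f ≫ eqToHom h1.symm
  /-- (RN2): `Θ` is closed under left rotation. -/
  rot : ∀ X ∈ Θ, ∀ T, IsRotation X T → T ∈ Θ
  /-- (RN3): commutative squares extend to morphisms of right `(n+2)`-angles. -/
  rn3 : ∀ X Y : SgSeq C Sg n, X ∈ Θ → Y ∈ Θ →
    ∀ (a : X.obj 0 ⟶ Y.obj 0) (b : X.obj 1 ⟶ Y.obj 1), X.map 0 ≫ b = a ≫ Y.map 0 →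
      ∃ f : SgSeqHom X Y, f.hom 0 = a ∧ f.hom 1 = b

/-- A right `(n+2)`-angulated category: (RN1)–(RN3) together with the higher
octahedral axiom (RN4). -/
structure RightAngulated (Sg : C ⥤ C) (n : ℕ) (Θ : Set (SgSeq C Sg n)) extends
    RightAngulatedRN123 Sg n Θ : Prop where
  /-- (RN4): the higher octahedral axiom. -/
  rn4 : ∀ X Y U : SgSeq C Sg n, X ∈ Θ → Y ∈ Θ → U ∈ Θ →
    ∀ (h0 : Y.obj 0 = X.obj 0) (hU0 : U.obj 0 = X.obj 1) (hU1 : U.obj 1 = Y.obj 1),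
    Y.map 0 = eqToHom h0 ≫ X.map 0 ≫ (eqToHom hU0.symm ≫ U.map 0 ≫ eqToHom hU1) →
    ∃ (φ : ∀ i, X.obj i ⟶ Y.obj i) (ψ : ∀ i, Y.obj i ⟶ U.obj i)
      (φ' : ∀ i, X.obj (i + 1) ⟶ U.obj i),
      φ 0 = eqToHom h0.symm ∧
      φ 1 = eqToHom hU0.symm ≫ U.map 0 ≫ eqToHom hU1 ∧
      (∀ i, i ≤ n → X.map i ≫ φ (i + 1) = φ i ≫ Y.map i) ∧
      (φ (n + 1) ≫ Y.ext ≫ eqToHom (congrArg Sg.obj h0) = X.ext) ∧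
      (ψ (n + 1) ≫ U.ext ≫ eqToHom (congrArg Sg.obj hU0) =
        Y.ext ≫ eqToHom (congrArg Sg.obj h0) ≫ Sg.map (X.map 0)) ∧
      ∃ V ∈ Θ, ∃ (hV0 : V.obj 0 = X.obj 2)
        (hV1 : 2 ≤ n → V.obj 1 = (X.obj 3 ⊞ Y.obj 2))
        (hVmid : ∀ i, 2 ≤ i → i + 1 ≤ n → V.obj i = ((X.obj (i + 2) ⊞ Y.obj (i + 1)) ⊞ U.obj i))
        (hVn : ∀ j, j = n → 2 ≤ n → V.obj j = (Y.obj (j + 1) ⊞ U.obj j))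
        (hVl : V.obj (n + 1) = U.obj (n + 1)),
        (∀ h : 2 ≤ n, V.map 0 =
          eqToHom hV0 ≫ biprod.lift (X.map 2) (φ 2) ≫ eqToHom (hV1 h).symm) ∧
        (∀ h : 3 ≤ n, V.map 1 = eqToHom (hV1 (by omega)) ≫
          biprod.desc (biprod.lift (biprod.lift (-(X.map 3)) (φ 3)) (φ' 2))
            (biprod.lift (biprod.lift 0 (-(Y.map 2))) (ψ 2)) ≫
          eqToHom (hVmid 2 le_rfl h).symm) ∧
        (∀ i (h2 : 2 ≤ i) (hn : i + 2 ≤ n), V.map i =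
          eqToHom (hVmid i (by omega) (by omega)) ≫
          biprod.desc
            (biprod.desc
              (biprod.lift (biprod.lift (-(X.map (i + 2))) (((-1 : ℤ) ^ (i + 1)) • φ (i + 2))) (φ' (i + 1)))
              (biprod.lift (biprod.lift 0 (-(Y.map (i + 1)))) (ψ (i + 1))))
            (biprod.lift (biprod.lift 0 0) (U.map i)) ≫
          eqToHom (hVmid (i + 1) (by omega) (by omega)).symm) ∧
        (∀ h : n = 2, V.map 1 = eqToHom (hV1 (by omega)) ≫
          biprod.desc (biprod.lift (φ 3) (φ' 2)) (biprod.lift (-(Y.map 2)) (ψ 2)) ≫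
          eqToHom (hVn 2 h.symm (by omega)).symm) ∧
        (∀ i (h2 : 2 ≤ i) (hn : i + 1 = n), V.map i =
          eqToHom (hVmid i (by omega) (by omega)) ≫
          biprod.desc
            (biprod.desc
              (biprod.lift (((-1 : ℤ) ^ (i + 1)) • φ (i + 2)) (φ' (i + 1)))
              (biprod.lift (-(Y.map (i + 1))) (ψ (i + 1))))
            (biprod.lift 0 (U.map i)) ≫
          eqToHom (hVn (i + 1) (by omega) (by omega)).symm) ∧
        (∀ j (hj : j = n) (hn : 2 ≤ n), V.map j =
          eqToHom (hVn j hj hn) ≫ biprod.desc (ψ (j + 1)) (U.map j) ≫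
          eqToHom (show U.obj (j + 1) = V.obj (j + 1) from by rw [hj]; exact hVl.symm)) ∧
        (V.ext = eqToHom hVl ≫ U.ext ≫ eqToHom (congrArg Sg.obj hU0) ≫
          Sg.map (X.map 1) ≫ eqToHom (congrArg Sg.obj hV0).symm) ∧
        (∀ h : n = 1, ∃ e1 : V.obj 1 = Y.obj 2,
          V.map 0 = eqToHom hV0 ≫ φ 2 ≫ eqToHom e1.symm ∧
          V.map 1 = eqToHom e1 ≫ ψ 2 ≫
            eqToHom (show U.obj 2 = V.obj 2 from by
              rw [show (2 : ℕ) = n + 1 from by omega]; exact hVl.symm))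

/-- An `(n+2)`-angulated category in the sense of Geiss–Keller–Oppermann:
in addition to being right `(n+2)`-angulated, the suspension is an equivalence,
and `Θ` is closed under direct summands and inverse rotation. -/
structure Angulated (Sg : C ⥤ C) (n : ℕ) (Θ : Set (SgSeq C Sg n)) extends
    RightAngulated Sg n Θ : Prop where
  sg_equiv : Sg.IsEquivalence
  sg_additive : Sg.Additive
  rot_rev : ∀ X T : SgSeq C Sg n, IsRotation X T → T ∈ Θ → X ∈ Θ
  summand_closed : ∀ X Y U : SgSeq C Sg n, IsBiprodSgSeq X Y U → U ∈ Θ → X ∈ Θ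

end Angulated

/-!
Rotating the trivial angle `0 → A = A → 0 → ⋯` gives a right angle `A = A → 0 → ⋯` in `Θ`.
Given a right angle starting with `f₀ : A → A₁`, (RN3) maps the former to the latter with
`φ₁ = f₀`, and commutativity of the second square reads `f₁ ∘ f₀ = φ₂ ∘ 0 = 0`. Since (RN2)
moves every consecutive pair `(fᵢ, fᵢ₊₁)`, including `(fₙ, fₙ₊₁)`, to the front of a rotated
angle, all composites vanish.
-/

namespace SgSeq

variable {C : Type u} [Category.{v} C] [Preadditive C] {Sg : C ⥤ C} {n : ℕ}

/-- Entries past position `n + 1` play no role; they are filled with `Σ A₀` and zero maps. -/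
def rotate (X : SgSeq C Sg n) : SgSeq C Sg n where
  obj i := if i ≤ n then X.obj (i + 1) else Sg.obj (X.obj 0)
  map i :=
    if h : i + 1 ≤ n then
      eqToHom (if_pos (by omega)) ≫ X.map (i + 1) ≫ eqToHom (if_pos h).symm
    else if h' : i = n then
      eqToHom (if_pos (by omega)) ≫ eqToHom (congrArg X.obj (by omega)) ≫ X.ext ≫
        eqToHom (if_neg (by omega)).symm
    else 0
  ext := eqToHom (if_neg (by omega)) ≫ (((-1 : ℤ) ^ n) • Sg.map (X.map 0)) ≫
    eqToHom (congrArg Sg.obj (if_pos (by omega)).symm)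

lemma isRotation_rotate (X : SgSeq C Sg n) : IsRotation X X.rotate := by
  refine ⟨fun i h => if_pos h, if_neg (by omega), fun i h => dif_pos h, ?_, rfl⟩
  simp [rotate]

end SgSeq

lemma comp_eq_zero_of_eqToHom_conj {C : Type u} [Category.{v} C] [HasZeroMorphisms C]
    {A B D A' B' D' : C} (hA : A' = A) (hB : B' = B) (hD : D' = D) (f : A ⟶ B) (g : B ⟶ D)
    (h : (eqToHom hA ≫ f ≫ eqToHom hB.symm) ≫ (eqToHom hB ≫ g ≫ eqToHom hD.symm) = 0) :
    f ≫ g = 0 := by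
  subst hA hB hD
  simpa using h

namespace IsRotation

variable {C : Type u} [Category.{v} C] [Preadditive C] {Sg : C ⥤ C} {n : ℕ}
  {X T : SgSeq C Sg n}

lemma map_comp_map_eq_zero (hT : IsRotation X T) {i : ℕ} (hi : i + 2 ≤ n)
    (h : T.map i ≫ T.map (i + 1) = 0) : X.map (i + 1) ≫ X.map (i + 2) = 0 := by
  obtain ⟨e, -, hmap, -, -⟩ := hT
  rw [hmap i (by omega), hmap (i + 1) hi] at h
  exact comp_eq_zero_of_eqToHom_conj _ _ (e (i + 2) hi) _ _ h

lemma map_comp_ext_eq_zero (hT : IsRotation X T) {m : ℕ} (hm : m + 1 = n)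
    (h : T.map m ≫ T.map (m + 1) = 0) : X.map n ≫ X.ext = 0 := by
  subst hm
  obtain ⟨e, el, hmap, hlast, -⟩ := hT
  rw [hmap m le_rfl, hlast] at h
  exact comp_eq_zero_of_eqToHom_conj _ _ el _ _ h

end IsRotation

namespace RightAngulatedRN123

variable {C : Type u} [Category.{v} C] [Preadditive C] [HasBinaryBiproducts C]
  {Sg : C ⥤ C} {n : ℕ} {Θ : Set (SgSeq C Sg n)}

lemma rotate_mem (hΘ : RightAngulatedRN123 Sg n Θ) {X : SgSeq C Sg n} (hX : X ∈ Θ) :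
    X.rotate ∈ Θ :=
  hΘ.rot X hX _ X.isRotation_rotate

lemma ext_eq_zero_of_isTrivialSgSeq (hΘ : RightAngulatedRN123 Sg n Θ) (hn : 0 < n) {A : C}
    {T : SgSeq C Sg n} (hT : T ∈ Θ) (htriv : IsTrivialSgSeq A T) : T.ext = 0 := by
  obtain ⟨hz0, ⟨h1, h2, hmap1⟩, hz⟩ := htriv
  -- `Σ` need not preserve zero objects, so `T.ext` is killed via the endomorphism `(𝟙, 0, …)`.
  obtain ⟨φ, hφ0, hφ1⟩ := hΘ.rn3 T T hT hT (𝟙 _) 0 (by simp [hz0.eq_of_src (T.map 0) 0])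
  have hφ2 : φ.hom 2 = 0 := by
    have hsquare := φ.comm 1 hn
    rw [hφ1, zero_comp, hmap1] at hsquare
    simpa using hsquare
  have hφlast : φ.hom (n + 1) = 0 := by
    rcases (by omega : n = 1 ∨ 3 ≤ n + 1) with rfl | h
    · exact hφ2
    · exact (hz (n + 1) h le_rfl).eq_of_src _ _
  simpa [hφ0, hφlast] using φ.comm_ext

lemma exists_mem_map_zero_eq_eqToHom_map_one_eq_zero (hΘ : RightAngulatedRN123 Sg n Θ)
    (hn : 0 < n) (A : C) :
    ∃ Y ∈ Θ, ∃ (e0 : Y.obj 0 = A) (e1 : Y.obj 1 = A),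
      Y.map 0 = eqToHom (e0.trans e1.symm) ∧ Y.map 1 = 0 := by
  obtain ⟨T, hT, htriv⟩ := hΘ.trivial_mem A
  have hext := hΘ.ext_eq_zero_of_isTrivialSgSeq hn hT htriv
  obtain ⟨-, ⟨h1, h2, hmap1⟩, hz⟩ := htriv
  obtain ⟨e, el, hmap, hlast, -⟩ := T.isRotation_rotate
  refine ⟨T.rotate, hΘ.rotate_mem hT, (e 0 (by omega)).trans h1, (e 1 hn).trans h2, ?_, ?_⟩
  · rw [hmap 0 hn, hmap1]
    simp
  · rcases (by omega : n = 1 ∨ 2 ≤ n) with rfl | h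
    · rw [hlast, hext]
      simp
    · rw [hmap 1 h, (hz 3 le_rfl (by omega)).eq_of_tgt (T.map 2) 0]
      simp

lemma map_zero_comp_map_one_eq_zero (hΘ : RightAngulatedRN123 Sg n Θ) (hn : 0 < n)
    {X : SgSeq C Sg n} (hX : X ∈ Θ) : X.map 0 ≫ X.map 1 = 0 := by
  obtain ⟨Y, hY, e0, e1, hmap0, hmap1⟩ :=
    hΘ.exists_mem_map_zero_eq_eqToHom_map_one_eq_zero hn (X.obj 0)
  obtain ⟨φ, -, hφ1⟩ := hΘ.rn3 Y X hY hX (eqToHom e0) (eqToHom e1 ≫ X.map 0) (by simp [hmap0])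
  have hsquare := φ.comm 1 hn
  rw [hmap1, zero_comp, hφ1, Category.assoc] at hsquare
  simpa using hsquare.symm

lemma map_comp_map_eq_zero (hΘ : RightAngulatedRN123 Sg n Θ) {X : SgSeq C Sg n} (hX : X ∈ Θ)
    {i : ℕ} (hi : i + 1 ≤ n) : X.map i ≫ X.map (i + 1) = 0 := by
  induction i generalizing X with
  | zero => exact hΘ.map_zero_comp_map_one_eq_zero (by omega) hX
  | succ i ih =>
    exact X.isRotation_rotate.map_comp_map_eq_zero hi (ih (hΘ.rotate_mem hX) (by omega))

lemma map_comp_ext_eq_zero (hΘ : RightAngulatedRN123 Sg n Θ) (hn : 0 < n) {X : SgSeq C Sg n}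
    (hX : X ∈ Θ) : X.map n ≫ X.ext = 0 :=
  X.isRotation_rotate.map_comp_ext_eq_zero (Nat.sub_add_cancel hn)
    (hΘ.map_comp_map_eq_zero (hΘ.rotate_mem hX) (by omega))

end RightAngulatedRN123

theorem rightAngle_comp_eq_zero_general
    {n : ℕ} (hn : 0 < n) {C : Type u} [Category.{v} C] [Preadditive C]
    [HasBinaryBiproducts C]
    (Sg : C ⥤ C) (Θ : Set (SgSeq C Sg n)) (hΘ : RightAngulatedRN123 Sg n Θ)
    (X : SgSeq C Sg n) (hX : X ∈ Θ) :
    (∀ i, i + 1 ≤ n → X.map i ≫ X.map (i + 1) = 0) ∧ X.map n ≫ X.ext = 0 :=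
  ⟨fun _ hi => hΘ.map_comp_map_eq_zero hX hi, hΘ.map_comp_ext_eq_zero hn hX⟩

/-- In a category with a class `Θ` of `(n+2)`-`Σ`-sequences
satisfying (RN1)–(RN3), any composition of two consecutive morphisms in a right
`(n+2)`-angle vanishes. -/
theorem rightAngle_comp_eq_zero
    {n : ℕ} (hn : 0 < n) {C : Type u} [Category.{v} C] [Preadditive C]
    [HasZeroObject C] [HasBinaryBiproducts C]
    (Sg : C ⥤ C) (Θ : Set (SgSeq C Sg n)) (hΘ : RightAngulatedRN123 Sg n Θ)
    (X : SgSeq C Sg n) (hX : X ∈ Θ) :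
    (∀ i, i + 1 ≤ n → X.map i ≫ X.map (i + 1) = 0) ∧ X.map n ≫ X.ext = 0 :=
  rightAngle_comp_eq_zero_general hn Sg Θ hΘ X hX
end

section
/- Let A be an additive category with an additive endofunctor Σ and a class Θ of (n+2)-Σ-sequences satisfying axioms (RN1), (RN2) and (RN3). For every right (n+2)-angle A_0 --f_0--> A_1 --f_1--> A_2 → ⋯ --f_{n-1}--> A_n --f_n--> A_{n+1} --f_{n+1}--> ΣA_0 in Θ, the morphism f_i is a weak cokernel of f_{i−1} for all i = 1, 2, …, n+1. -/
open CategoryTheory CategoryTheory.Limits Opposite ZeroObject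

universe v u

/-!
Each pair of consecutive maps of a right `(n+2)`-angle is the first pair of an iterated left
rotation, which lies in `Θ` by (RN2); so only `f₀, f₁` matter. If `f₀ ≫ h = 0` with
`h : A₁ ⟶ Z`, then (RN3) applied to `(0, h)` gives a ladder to the trivial angle
`0 → Z = Z → 0 → ⋯`, whose third component factors `h` through `f₁`. Dually, the ladder with
components `(𝟙, f₀)` from the rotated trivial angle `A₀ = A₀ → 0 → ⋯` (for `n = 1`:
`A₀ = A₀ → Σ0 → ΣA₀`, and `Σ0` is zero) shows `f₀ ≫ f₁ = 0`.
-/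

section WeakCokernel

variable {C : Type u} [Category.{v} C] {Sg : C ⥤ C} {n : ℕ}

lemma IsTrivialSgSeq.isZero_obj_succ {A : C} {T : SgSeq C Sg n} (hT : IsTrivialSgSeq A T)
    (hA : IsZero A) : IsZero (T.obj (n + 1)) := by
  obtain ⟨-, ⟨h1, h2, -⟩, hz⟩ := hT
  rcases n with _ | _ | n
  · exact hA.of_iso (eqToIso h1)
  · exact hA.of_iso (eqToIso h2)
  · exact hz _ (by omega) le_rfl

variable [Preadditive C]

lemma isWeakCokernel_eqToHom_iff {A A' B B' D D' : C} (hA : A' = A) (hB : B' = B)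
    (hD : D' = D) (f : A ⟶ B) (g : B ⟶ D) :
    IsWeakCokernel (eqToHom hA ≫ f ≫ eqToHom hB.symm) (eqToHom hB ≫ g ≫ eqToHom hD.symm) ↔
      IsWeakCokernel f g := by
  subst hA hB hD
  simp

/-- The maps beyond position `n` are junk `0`. -/
def SgSeq.rotate_s4 (X : SgSeq C Sg n) : SgSeq C Sg n where
  obj i := if i ≤ n then X.obj (i + 1) else Sg.obj (X.obj 0)
  map i :=
    if h : i < n then
      eqToHom (if_pos h.le) ≫ X.map (i + 1) ≫ eqToHom (if_pos (Nat.succ_le_of_lt h)).symm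
    else if h' : i = n then
      eqToHom ((if_pos h'.le).trans (by rw [h'])) ≫ X.ext ≫ eqToHom (if_neg (by omega)).symm
    else 0
  ext := eqToHom (if_neg (by omega)) ≫ (((-1 : ℤ) ^ n) • Sg.map (X.map 0)) ≫
    eqToHom (congrArg Sg.obj (if_pos (Nat.zero_le n))).symm

lemma SgSeq.isRotation_rotate_s4 (X : SgSeq C Sg n) : IsRotation X X.rotate_s4 :=
  ⟨fun _ hi => by exact if_pos hi, by exact if_neg (by omega), fun _ h => by exact dif_pos h,
    by exact (dif_neg (lt_irrefl n)).trans (dif_pos rfl), rfl⟩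

namespace IsRotation

variable {X T : SgSeq C Sg n}

lemma isWeakCokernel_map_succ (hT : IsRotation X T) {i : ℕ} (hi : i + 2 ≤ n)
    (h : IsWeakCokernel (T.map i) (T.map (i + 1))) :
    IsWeakCokernel (X.map (i + 1)) (X.map (i + 2)) := by
  obtain ⟨e, -, hmap, -, -⟩ := hT
  rw [hmap i (by omega), hmap (i + 1) hi] at h
  exact (isWeakCokernel_eqToHom_iff _ _ (e _ hi) _ _).1 h

lemma isWeakCokernel_ext (hT : IsRotation X T) {i : ℕ} (hi : i + 1 = n)
    (h : IsWeakCokernel (T.map i) (T.map (i + 1))) : IsWeakCokernel (X.map n) X.ext := by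
  subst hi
  obtain ⟨e, el, hmap, hlast, -⟩ := hT
  rw [hmap i le_rfl, hlast] at h
  exact (isWeakCokernel_eqToHom_iff _ _ el _ _).1 h

end IsRotation

namespace RightAngulatedRN123

variable [HasBinaryBiproducts C] {Θ : Set (SgSeq C Sg n)}

lemma exists_isRotation_mem (hΘ : RightAngulatedRN123 Sg n Θ) {X : SgSeq C Sg n} (hX : X ∈ Θ) :
    ∃ T ∈ Θ, IsRotation X T :=
  ⟨X.rotate_s4, hΘ.rot X hX _ X.isRotation_rotate_s4, X.isRotation_rotate_s4⟩

/-- Although `Σ` is not assumed additive, it preserves zero objects: for the trivial sequence `T`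
of a zero object, a ladder from its rotation back to `T` makes `± 𝟙 (Σ T₀)` factor through the
zero object `T_{n+1}`. -/
lemma isZero_sg_obj (hΘ : RightAngulatedRN123 Sg n Θ) {Z : C} (hZ : IsZero Z) :
    IsZero (Sg.obj Z) := by
  obtain ⟨T, hT, hTriv⟩ := hΘ.trivial_mem Z
  obtain ⟨R, hR, e, el, -, -, hext⟩ := hΘ.exists_isRotation_mem hT
  obtain ⟨φ, -, -⟩ := hΘ.rn3 R T hR hT 0 0 (by simp)
  have hid : Sg.map (T.map 0) ≫ eqToHom (congrArg Sg.obj (e 0 (Nat.zero_le n)).symm) ≫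
      Sg.map (φ.hom 0) = 𝟙 _ := by
    rw [← eqToHom_map (p := (e 0 (Nat.zero_le n)).symm), ← Sg.map_comp, ← Sg.map_comp,
      ← Sg.map_id]
    exact congrArg Sg.map (hTriv.1.eq_of_src _ _)
  have hsign : ((-1 : ℤ) ^ n) • eqToHom el = 0 := by
    have hcomm := φ.comm_ext
    rw [hext, (hTriv.isZero_obj_succ hZ).eq_of_tgt (φ.hom (n + 1)) 0, zero_comp] at hcomm
    simpa [Preadditive.zsmul_comp, Preadditive.comp_zsmul, hid] using hcomm
  have hT0 : IsZero (Sg.obj (T.obj 0)) := by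
    rw [IsZero.iff_id_eq_zero]
    have h := congrArg (eqToHom el.symm ≫ ·) hsign
    rcases neg_one_pow_eq_or ℤ n with hs | hs <;> simpa [hs] using h
  exact hT0.of_iso (Sg.mapIso (hZ.iso hTriv.1))

lemma map_comp_map_eq_zero_s4 (hΘ : RightAngulatedRN123 Sg n Θ) (hn : 0 < n) {Y : SgSeq C Sg n}
    (hY : Y ∈ Θ) : Y.map 0 ≫ Y.map 1 = 0 := by
  obtain ⟨T, hT, hT0, ⟨h1, h2, hT1⟩, hz⟩ := hΘ.trivial_mem (Y.obj 0)
  obtain ⟨R, hR, e, el, hmap, -, -⟩ := hΘ.exists_isRotation_mem hT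
  have hR2 : IsZero (R.obj 2) := by
    rcases Nat.lt_or_ge 1 n with hn2 | hn1
    · exact (hz 3 (by omega) (by omega)).of_iso (eqToIso (e 2 hn2))
    · obtain rfl : n = 1 := by omega
      exact (hΘ.isZero_sg_obj hT0).of_iso (eqToIso el)
  obtain ⟨φ, -, hφ1⟩ := hΘ.rn3 R Y hR hY (eqToHom ((e 0 hn.le).trans h1))
    (eqToHom ((e 1 hn).trans h2) ≫ Y.map 0) (by rw [hmap 0 hn, hT1]; simp)
  have hcomm := φ.comm 1 hn
  rw [hR2.eq_of_tgt (R.map 1) 0, zero_comp, hφ1, Category.assoc] at hcomm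
  simpa using hcomm.symm

lemma exists_map_one_comp_eq (hΘ : RightAngulatedRN123 Sg n Θ) (hn : 0 < n) {Y : SgSeq C Sg n}
    (hY : Y ∈ Θ) {Z : C} (h : Y.obj 1 ⟶ Z) (hh : Y.map 0 ≫ h = 0) :
    ∃ p : Y.obj 2 ⟶ Z, Y.map 1 ≫ p = h := by
  obtain ⟨T, hT, -, ⟨h1, h2, hT1⟩, -⟩ := hΘ.trivial_mem Z
  obtain ⟨φ, -, hφ1⟩ := hΘ.rn3 Y T hY hT 0 (h ≫ eqToHom h1.symm)
    (by rw [reassoc_of% hh, zero_comp, zero_comp])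
  refine ⟨φ.hom 2 ≫ eqToHom h2, ?_⟩
  rw [← Category.assoc, φ.comm 1 hn, hφ1, hT1]
  simp

lemma isWeakCokernel_map (hΘ : RightAngulatedRN123 Sg n Θ) {Y : SgSeq C Sg n} (hY : Y ∈ Θ)
    {i : ℕ} (hi : i + 1 ≤ n) : IsWeakCokernel (Y.map i) (Y.map (i + 1)) := by
  induction i generalizing Y with
  | zero =>
    exact ⟨hΘ.map_comp_map_eq_zero_s4 hi hY, fun _ h hh => hΘ.exists_map_one_comp_eq hi hY h hh⟩
  | succ i ih =>
    obtain ⟨R, hR, hYR⟩ := hΘ.exists_isRotation_mem hY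
    exact hYR.isWeakCokernel_map_succ hi (ih hR (by omega))

end RightAngulatedRN123

end WeakCokernel

theorem rightAngle_isWeakCokernel_general
    {n : ℕ} (hn : 0 < n) {C : Type u} [Category.{v} C] [Preadditive C]
    [HasBinaryBiproducts C]
    (Sg : C ⥤ C) (Θ : Set (SgSeq C Sg n)) (hΘ : RightAngulatedRN123 Sg n Θ)
    (X : SgSeq C Sg n) (hX : X ∈ Θ) :
    (∀ i, i + 1 ≤ n → IsWeakCokernel (X.map i) (X.map (i + 1))) ∧
      IsWeakCokernel (X.map n) X.ext := by
  obtain ⟨R, hR, hXR⟩ := hΘ.exists_isRotation_mem hX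
  exact ⟨fun _ hi => hΘ.isWeakCokernel_map hX hi,
    hXR.isWeakCokernel_ext (Nat.sub_add_cancel hn) (hΘ.isWeakCokernel_map hR (by omega))⟩

/-- In a category with a class `Θ` of `(n+2)`-`Σ`-sequences
satisfying (RN1)–(RN3), each morphism of a right `(n+2)`-angle is a weak
cokernel of the preceding one. -/
theorem rightAngle_isWeakCokernel
    {n : ℕ} (hn : 0 < n) {C : Type u} [Category.{v} C] [Preadditive C]
    [HasZeroObject C] [HasBinaryBiproducts C]
    (Sg : C ⥤ C) (Θ : Set (SgSeq C Sg n)) (hΘ : RightAngulatedRN123 Sg n Θ)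
    (X : SgSeq C Sg n) (hX : X ∈ Θ) :
    (∀ i, i + 1 ≤ n → IsWeakCokernel (X.map i) (X.map (i + 1))) ∧
      IsWeakCokernel (X.map n) X.ext :=
  rightAngle_isWeakCokernel_general hn Sg Θ hΘ X hX
end

section
/- Let (C,E,s) be an n-exangulated category and A_0 --α_0--> A_1 --α_1--> A_2 → ⋯ --α_{n-1}--> A_n --α_n--> A_{n+1} ⇢δ a distinguished n-exangle. Then for every object Y of C the following sequences of abelian groups are exact: C(Y,A_0) → C(Y,A_1) → ⋯ → C(Y,A_{n+1}) → E(Y,A_0) → E(Y,A_1) → E(Y,A_2), where the maps C(Y,A_i) → C(Y,A_{i+1}) are composition with α_i, the map C(Y,A_{n+1}) → E(Y,A_0) sends f to f^*δ, and the maps E(Y,A_i) → E(Y,A_{i+1}) are (α_i)_*; and dually C(A_{n+1},Y) → C(A_n,Y) → ⋯ → C(A_0,Y) → E(A_{n+1},Y) → E(A_n,Y) → E(A_{n-1},Y), where C(A_0,Y) → E(A_{n+1},Y) sends g to g_*δ. In particular, for each consecutive pair of differentials, α_{i+1} is a weak cokernel of α_i and α_i is a weak kernel of α_{i+1}. -/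
open CategoryTheory CategoryTheory.Limits Opposite ZeroObject

universe v u

/-!
Everything except exactness at the four `E`-terms is axiom (R1). For exactness at `E(Z, A₀)`,
take `θ` with `(α₀)_* θ = 0`, realize `fst^* θ + snd^* δ ∈ E(Z ⊞ A_{n+1}, A₀)` and take a good lift
of `(id, inr)` (EA2). Its mapping cone carries `(α₀)_*` of that extension, which vanishes, so the
last differential of the cone is a split epimorphism; this writes `inl = p ≫ inr + q ≫ d`, and
pulling back gives `θ = p^* δ`. For exactness at `E(Z, A₁)`, realize `ε`, compose `α₀` with the
first differential of the realization (EA1), good-lift along the `c` supplied by the first step,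
and apply the first step to the mapping cone. The contravariant side is dual, via (EA2ᵒᵖ).
-/

namespace ExData

variable {n : ℕ} {C : Type u} [Category.{v} C] [Preadditive C] {S : ExData n C}

@[simp]
lemma push_push {Cc A A' A'' : C} (a : A ⟶ A') (b : A' ⟶ A'') (δ : S.Ext Cc A) :
    S.push b (S.push a δ) = S.push (a ≫ b) δ := by
  simp [push]

@[simp]
lemma pull_pull {D' D Cc A : C} (c : D ⟶ Cc) (c' : D' ⟶ D) (δ : S.Ext Cc A) :
    S.pull c' (S.pull c δ) = S.pull (c' ≫ c) δ := by
  simp [pull]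

@[simp]
lemma push_pull {Cc' Cc A A' : C} (a : A ⟶ A') (c : Cc' ⟶ Cc) (δ : S.Ext Cc A) :
    S.push a (S.pull c δ) = S.pull c (S.push a δ) :=
  (ConcreteCategory.congr_hom ((S.E.map c.op).naturality a) δ).symm

@[simp]
lemma push_id {Cc A : C} (δ : S.Ext Cc A) : S.push (𝟙 A) δ = δ := by
  simp [push]

@[simp]
lemma pull_id {Cc A : C} (δ : S.Ext Cc A) : S.pull (𝟙 Cc) δ = δ := by
  simp [pull]

@[simp]
lemma push_zero {Cc A A' : C} (a : A ⟶ A') : S.push a (0 : S.Ext Cc A) = 0 :=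
  map_zero _

@[simp]
lemma pull_zero {Cc' Cc A : C} (c : Cc' ⟶ Cc) : S.pull c (0 : S.Ext Cc A) = 0 :=
  map_zero _

lemma push_add {Cc A A' : C} (a : A ⟶ A') (δ δ' : S.Ext Cc A) :
    S.push a (δ + δ') = S.push a δ + S.push a δ' := map_add _ _ _

lemma pull_add {Cc' Cc A : C} (c : Cc' ⟶ Cc) (δ δ' : S.Ext Cc A) :
    S.pull c (δ + δ') = S.pull c δ + S.pull c δ' := map_add _ _ _

section Additive

variable {Cc' Cc A A' : C}

@[simp]
lemma zero_push [(S.E.obj (op Cc)).Additive] (δ : S.Ext Cc A) :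
    S.push (0 : A ⟶ A') δ = 0 := by
  simp [push]

lemma add_push [(S.E.obj (op Cc)).Additive] (a a' : A ⟶ A') (δ : S.Ext Cc A) :
    S.push (a + a') δ = S.push a δ + S.push a' δ := by
  simp [push]

lemma neg_push [(S.E.obj (op Cc)).Additive] (a : A ⟶ A') (δ : S.Ext Cc A) :
    S.push (-a) δ = -S.push a δ := by
  simp [push]

lemma sub_push [(S.E.obj (op Cc)).Additive] (a a' : A ⟶ A') (δ : S.Ext Cc A) :
    S.push (a - a') δ = S.push a δ - S.push a' δ := by
  simp [push]

@[simp]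
lemma zero_pull [S.E.Additive] (δ : S.Ext Cc A) : S.pull (0 : Cc' ⟶ Cc) δ = 0 := by
  simp [pull]

lemma add_pull [S.E.Additive] (c c' : Cc' ⟶ Cc) (δ : S.Ext Cc A) :
    S.pull (c + c') δ = S.pull c δ + S.pull c' δ := by
  simp [pull]

lemma sub_pull [S.E.Additive] (c c' : Cc' ⟶ Cc) (δ : S.Ext Cc A) :
    S.pull (c - c') δ = S.pull c δ - S.pull c' δ := by
  simp [pull]

end Additive

end ExData

namespace IsExangulated

open ExData

variable {n : ℕ} {C : Type u} [Category.{v} C] [Preadditive C] [HasBinaryBiproducts C]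
  {S : ExData n C} (hS : IsExangulated S)
include hS

lemma map_comp_map_eq_zero {X : ExSeq C} {δ : S.Ext (X.obj (n + 1)) (X.obj 0)}
    (hX : S.Dist X δ) {i : ℕ} (hi : i + 1 ≤ n) : X.map i ≫ X.map (i + 1) = 0 :=
  (hS.ex_cov_mid X δ hX i hi _ (X.map i)).mpr ⟨𝟙 _, Category.id_comp _⟩

lemma pull_map_last_eq_zero {X : ExSeq C} {δ : S.Ext (X.obj (n + 1)) (X.obj 0)}
    (hX : S.Dist X δ) : S.pull (X.map n) δ = 0 :=
  (hS.ex_cov_last X δ hX _ (X.map n)).mpr ⟨𝟙 _, Category.id_comp _⟩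

lemma push_map_zero_eq_zero {X : ExSeq C} {δ : S.Ext (X.obj (n + 1)) (X.obj 0)}
    (hX : S.Dist X δ) : S.push (X.map 0) δ = 0 :=
  (hS.ex_con_last X δ hX _ (X.map 0)).mpr ⟨𝟙 _, Category.comp_id _⟩

lemma exists_comp_map_last_eq_of_dist_zero {X : ExSeq C} (hX : S.Dist X 0) {Z : C}
    (g : Z ⟶ X.obj (n + 1)) : ∃ h : Z ⟶ X.obj n, h ≫ X.map n = g :=
  (hS.ex_cov_last X 0 hX Z g).mp (pull_zero g)

lemma exists_map_zero_comp_eq_of_dist_zero {X : ExSeq C} (hX : S.Dist X 0) {Z : C}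
    (g : X.obj 0 ⟶ Z) : ∃ h : X.obj 1 ⟶ Z, X.map 0 ≫ h = g :=
  (hS.ex_con_last X 0 hX Z g).mp (push_zero g)

lemma push_eq_push_of_map_comp_eq {X : ExSeq C} {δ : S.Ext (X.obj (n + 1)) (X.obj 0)}
    (hX : S.Dist X δ) {i : ℕ} (hi : i + 1 ≤ n) {Z W : C} {ε : S.Ext Z (X.obj (i + 1))}
    (hε : S.push (X.map (i + 1)) ε = 0) {g g' : X.obj (i + 1) ⟶ W}
    (h : X.map i ≫ g = X.map i ≫ g') : S.push g ε = S.push g' ε := by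
  have := hS.additive_right
  obtain ⟨w, hw⟩ := (hS.ex_con_mid X δ hX i hi W (g - g')).mp
    (by rw [Preadditive.comp_sub, h, sub_self])
  rw [← sub_eq_zero, ← sub_push, ← hw, ← push_push, hε, push_zero]

lemma pull_eq_pull_of_comp_map_eq {X : ExSeq C} {δ : S.Ext (X.obj (n + 1)) (X.obj 0)}
    (hX : S.Dist X δ) {i : ℕ} (hi : i + 1 ≤ n) {Z W : C} {ε : S.Ext (X.obj (i + 1)) Z}
    (hε : S.pull (X.map i) ε = 0) {g g' : W ⟶ X.obj (i + 1)}
    (h : g ≫ X.map (i + 1) = g' ≫ X.map (i + 1)) : S.pull g ε = S.pull g' ε := by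
  have := hS.additive_left
  obtain ⟨w, hw⟩ := (hS.ex_cov_mid X δ hX i hi W (g - g')).mp
    (by rw [Preadditive.sub_comp, h, sub_self])
  rw [← sub_eq_zero, ← sub_pull, ← hw, ← pull_pull, hε, pull_zero]

/-- The mapping cone of the good lift of `(id, c)` carries the extension `(α₀)_* ρ = 0`, so its
last differential `[c, d_n^U]` is a split epimorphism. -/
lemma exists_eq_comp_add_comp_map_last (hn : 0 < n) {X U : ExSeq C}
    {ρ : S.Ext (U.obj (n + 1)) (U.obj 0)} (hU : S.Dist U ρ) (hA : X.obj 0 = U.obj 0)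
    (c : X.obj (n + 1) ⟶ U.obj (n + 1))
    (hX : S.Dist X (S.push (eqToHom hA.symm) (S.pull c ρ)))
    (hρ : S.push (eqToHom hA.symm ≫ X.map 0) ρ = 0) {Z : C} (g : Z ⟶ U.obj (n + 1)) :
    ∃ (p : Z ⟶ X.obj (n + 1)) (q : Z ⟶ U.obj n), p ≫ c + q ≫ U.map n = g := by
  obtain ⟨m, rfl⟩ : ∃ m, n = m + 1 := ⟨n - 1, by omega⟩
  obtain ⟨f, -, hfc, M, hM, hMdist⟩ := hS.ea2 X U ρ hA c hU hX
  rw [hρ, pull_zero, push_zero] at hMdist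
  obtain ⟨h, hh⟩ :=
    hS.exists_comp_map_last_eq_of_dist_zero hMdist (g ≫ eqToHom hM.hlast.symm)
  rw [hM.maplast m rfl, hfc, biprod.desc_eq] at hh
  refine ⟨h ≫ eqToHom (hM.hmid m le_rfl) ≫ biprod.fst,
    h ≫ eqToHom (hM.hmid m le_rfl) ≫ biprod.snd, ?_⟩
  rw [← cancel_mono (eqToHom hM.hlast.symm)]
  simpa [Preadditive.comp_add] using hh

lemma exists_eq_map_zero_comp_add_comp (hn : 0 < n) {Y X : ExSeq C}
    {ρ : S.Ext (Y.obj (n + 1)) (Y.obj 0)} (hY : S.Dist Y ρ) (hC : Y.obj (n + 1) = X.obj (n + 1))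
    (a : Y.obj 0 ⟶ X.obj 0) (hX : S.Dist X (S.push a (S.pull (eqToHom hC.symm) ρ)))
    (hρ : S.pull (X.map n ≫ eqToHom hC.symm) ρ = 0) {Z : C} (g : Y.obj 0 ⟶ Z) :
    ∃ (p : Y.obj 1 ⟶ Z) (q : X.obj 0 ⟶ Z), Y.map 0 ≫ p + a ≫ q = g := by
  obtain ⟨f, hfa, -, N, hN, hNdist⟩ := hS.ea2op Y X ρ hC a hY hX
  rw [← pull_pull, hρ, pull_zero, push_zero] at hNdist
  obtain ⟨h, hh⟩ :=
    hS.exists_map_zero_comp_eq_of_dist_zero hNdist (eqToHom hN.h0 ≫ g)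
  rw [hN.map0 hn, hfa, biprod.lift_eq] at hh
  refine ⟨-(biprod.inl ≫ eqToHom (hN.hmid 0 hn).symm ≫ h),
    biprod.inr ≫ eqToHom (hN.hmid 0 hn).symm ≫ h, ?_⟩
  rw [← cancel_epi (eqToHom hN.h0)]
  simpa [Preadditive.add_comp] using hh

lemma exists_pull_eq_of_push_map_zero_eq_zero (hn : 0 < n) {X : ExSeq C}
    {δ : S.Ext (X.obj (n + 1)) (X.obj 0)} (hX : S.Dist X δ) {Z : C}
    (θ : S.Ext Z (X.obj 0)) (hθ : S.push (X.map 0) θ = 0) :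
    ∃ f : Z ⟶ X.obj (n + 1), S.pull f δ = θ := by
  have := hS.additive_left
  have := hS.additive_right
  set φ : S.Ext (Z ⊞ X.obj (n + 1)) (X.obj 0) := S.pull biprod.fst θ + S.pull biprod.snd δ
  have hφinl : S.pull biprod.inl φ = θ := by simp [φ, pull_add]
  have hφinr : S.pull biprod.inr φ = δ := by simp [φ, pull_add]
  have hφ : S.push (X.map 0) φ = 0 := by
    simp [φ, push_add, hθ, hS.push_map_zero_eq_zero hX]
  obtain ⟨U, h0, h1, hU⟩ := hS.realize _ _ φ
  have hUφ : S.pull (U.map n) (S.pull (eqToHom h1) φ) = 0 := by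
    simpa using congrArg (S.push (eqToHom h0)) (hS.pull_map_last_eq_zero hU)
  obtain ⟨p, q, hpq⟩ := hS.exists_eq_comp_add_comp_map_last hn hU h0.symm
    (biprod.inr ≫ eqToHom h1.symm) (by simpa [hφinr] using hX)
    (by simp [hφ]) (biprod.inl ≫ eqToHom h1.symm)
  refine ⟨p, ?_⟩
  have := congrArg (fun t => S.pull (t ≫ eqToHom h1) φ) hpq
  simp only [Preadditive.add_comp, add_pull, Category.assoc, eqToHom_trans, eqToHom_refl,
    Category.comp_id] at this
  rwa [← pull_pull, ← pull_pull _ q, ← pull_pull (eqToHom h1), hφinr, hφinl, hUφ, pull_zero,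
    add_zero] at this

lemma exists_push_eq_of_pull_map_last_eq_zero (hn : 0 < n) {X : ExSeq C}
    {δ : S.Ext (X.obj (n + 1)) (X.obj 0)} (hX : S.Dist X δ) {Z : C}
    (ε : S.Ext (X.obj (n + 1)) Z) (hε : S.pull (X.map n) ε = 0) :
    ∃ g : X.obj 0 ⟶ Z, S.push g δ = ε := by
  have := hS.additive_left
  have := hS.additive_right
  set ψ : S.Ext (X.obj (n + 1)) (Z ⊞ X.obj 0) := S.push biprod.inl ε + S.push biprod.inr δ
  have hψfst : S.push biprod.fst ψ = ε := by simp [ψ, push_add]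
  have hψsnd : S.push biprod.snd ψ = δ := by simp [ψ, push_add]
  have hψ : S.pull (X.map n) ψ = 0 := by
    simp [ψ, pull_add, ← push_pull, hε, hS.pull_map_last_eq_zero hX]
  obtain ⟨V, h0, h1, hV⟩ := hS.realize _ _ ψ
  have hVψ : S.push (V.map 0) (S.push (eqToHom h0.symm) ψ) = 0 := by
    simpa using congrArg (S.pull (eqToHom h1.symm)) (hS.push_map_zero_eq_zero hV)
  obtain ⟨p, q, hpq⟩ := hS.exists_eq_map_zero_comp_add_comp hn hV h1
    (eqToHom h0 ≫ biprod.snd) (by simpa [hψsnd] using hX)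
    (by simp [← push_pull, hψ]) (eqToHom h0 ≫ biprod.fst)
  refine ⟨q, ?_⟩
  have := congrArg (fun t => S.push (eqToHom h0.symm ≫ t) ψ) hpq
  simp only [Preadditive.comp_add, add_push, Category.assoc, eqToHom_trans_assoc, eqToHom_refl,
    Category.id_comp] at this
  rwa [← push_push, ← push_push _ q, ← push_push (V.map 0), hψsnd, hψfst, hVψ,
    push_zero, zero_add] at this

lemma exists_lift_exists_push_map_zero_eq (hn : 0 < n) {X G : ExSeq C}
    {γ : S.Ext (G.obj (n + 1)) (G.obj 0)} (hG : S.Dist G γ) (hA : X.obj 0 = G.obj 0)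
    (c : X.obj (n + 1) ⟶ G.obj (n + 1))
    (hX : S.Dist X (S.push (eqToHom hA.symm) (S.pull c γ))) :
    ∃ f : ExSeqHom n X G, f.hom 0 = eqToHom hA ∧ ∀ {Z : C} (ε : S.Ext Z (X.obj 1)),
      S.push (X.map 1) ε = 0 → S.push (f.hom 1) ε = 0 →
        ∃ ε₀ : S.Ext Z (X.obj 0), S.push (X.map 0) ε₀ = ε := by
  have := hS.additive_right
  obtain ⟨f, hf0, -, M, hM, hMdist⟩ := hS.ea2 X G γ hA c hG hX
  refine ⟨f, hf0, fun ε hε hfε => ?_⟩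
  obtain ⟨u, hu⟩ := hS.exists_pull_eq_of_push_map_zero_eq_zero hn hMdist
    (S.push (eqToHom hM.h0.symm) ε) (by
      rw [push_push, hM.map0 hn, eqToHom_trans_assoc, eqToHom_refl, Category.id_comp,
        biprod.lift_eq]
      simp only [Preadditive.add_comp, add_push, ← push_push, hε, hfε, push_zero, add_zero,
        Preadditive.neg_comp, neg_push, neg_zero])
  refine ⟨S.pull (u ≫ eqToHom hM.hlast) (S.push (eqToHom hA.symm) γ), ?_⟩
  simpa using congrArg (S.push (eqToHom hM.h0)) hu

lemma exists_push_map_zero_eq_of_push_map_one_eq_zero (hn : 0 < n) {X : ExSeq C}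
    {δ : S.Ext (X.obj (n + 1)) (X.obj 0)} (hX : S.Dist X δ) {Z : C}
    (ε : S.Ext Z (X.obj 1)) (hε : S.push (X.map 1) ε = 0) :
    ∃ ε₀ : S.Ext Z (X.obj 0), S.push (X.map 0) ε₀ = ε := by
  obtain ⟨Y, hy0, hy1, hY⟩ := hS.realize _ _ ε
  have hYε : S.push (eqToHom hy0.symm ≫ Y.map 0) ε = 0 := by
    simpa using congrArg (S.pull (eqToHom hy1.symm)) (hS.push_map_zero_eq_zero hY)
  obtain ⟨G, γ, hG, hg0, hg1, hGmap⟩ := hS.comp_infl (X.map 0) (eqToHom hy0.symm ≫ Y.map 0)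
    ⟨X, δ, hX, rfl, rfl, by simp⟩ ⟨Y, _, hY, hy0, rfl, by simp⟩
  obtain ⟨c, hc⟩ := hS.exists_pull_eq_of_push_map_zero_eq_zero hn hG
    (S.push (eqToHom hg0.symm) δ) (by
      simp only [push_push, hGmap, eqToHom_trans_assoc, eqToHom_refl, Category.id_comp,
        Category.assoc]
      rw [← push_push, hS.push_map_zero_eq_zero hX, push_zero])
  obtain ⟨f, hf0, hfε⟩ :=
    hS.exists_lift_exists_push_map_zero_eq hn hG hg0.symm c (by simpa [hc] using hX)
  refine hfε ε hε ?_
  have hsq : X.map 0 ≫ f.hom 1 = X.map 0 ≫ eqToHom hy0.symm ≫ Y.map 0 ≫ eqToHom hg1.symm := by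
    simp [f.comm 0 n.zero_le, hf0, hGmap]
  rw [hS.push_eq_push_of_map_comp_eq hX hn hε hsq, ← Category.assoc, ← push_push, hYε,
    push_zero]

lemma exists_lift_exists_pull_map_eq {Y X : ExSeq C}
    {γ : S.Ext (Y.obj (n + 1)) (Y.obj 0)} (hY : S.Dist Y γ) (hC : Y.obj (n + 1) = X.obj (n + 1))
    (a : Y.obj 0 ⟶ X.obj 0) (hX : S.Dist X (S.push a (S.pull (eqToHom hC.symm) γ))) :
    ∃ g : ExSeqHom n Y X, g.hom (n + 1) = eqToHom hC ∧
      ∀ i, i + 1 = n → ∀ {Z : C} (ε : S.Ext (X.obj (i + 1)) Z),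
        S.pull (X.map i) ε = 0 → S.pull (g.hom (i + 1)) ε = 0 →
          ∃ ε' : S.Ext (X.obj (i + 2)) Z, S.pull (X.map (i + 1)) ε' = ε := by
  have := hS.additive_left
  obtain ⟨g, -, hgl, N, hN, hNdist⟩ := hS.ea2op Y X γ hC a hY hX
  refine ⟨g, hgl, ?_⟩
  intro i hi Z ε hε hgε
  subst hi
  obtain ⟨q, hq⟩ := hS.exists_push_eq_of_pull_map_last_eq_zero (Nat.succ_pos i) hNdist
    (S.pull (eqToHom hN.hlast) ε) (by
      rw [pull_pull, hN.maplast i rfl, Category.assoc, Category.assoc, eqToHom_trans,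
        eqToHom_refl, Category.comp_id, biprod.desc_eq]
      simp only [Preadditive.comp_add, add_pull, ← pull_pull, hε, hgε, pull_zero, add_zero])
  refine ⟨S.pull (eqToHom hC.symm) (S.push (eqToHom hN.h0.symm ≫ q) γ), ?_⟩
  simpa using congrArg (S.pull (eqToHom hN.hlast.symm)) hq

lemma exists_pull_map_eq_of_pull_map_eq_zero {X : ExSeq C}
    {δ : S.Ext (X.obj (n + 1)) (X.obj 0)} (hX : S.Dist X δ) {i : ℕ} (hi : i + 1 = n) {Z : C}
    (ε : S.Ext (X.obj (i + 1)) Z) (hε : S.pull (X.map i) ε = 0) :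
    ∃ ε' : S.Ext (X.obj (i + 2)) Z, S.pull (X.map (i + 1)) ε' = ε := by
  subst hi
  obtain ⟨V, hv0, hv1, hV⟩ := hS.realize _ _ ε
  have hVε : S.pull (V.map (i + 1) ≫ eqToHom hv1) ε = 0 := by
    simpa using congrArg (S.push (eqToHom hv0)) (hS.pull_map_last_eq_zero hV)
  obtain ⟨G, γ, hG, hgn, hgn1, hGmap⟩ := hS.comp_defl (V.map (i + 1) ≫ eqToHom hv1)
    (X.map (i + 1)) ⟨V, _, hV, rfl, hv1, by simp⟩ ⟨X, δ, hX, rfl, rfl, by simp⟩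
  obtain ⟨a, ha⟩ := hS.exists_push_eq_of_pull_map_last_eq_zero (Nat.succ_pos i) hG
    (S.pull (eqToHom hgn1) δ) (by
      simp only [pull_pull, hGmap, Category.assoc, eqToHom_trans, eqToHom_refl,
        Category.comp_id]
      simp only [← Category.assoc]
      rw [← pull_pull (X.map (i + 1)), hS.pull_map_last_eq_zero hX, pull_zero])
  obtain ⟨g, hgl, hgε⟩ :=
    hS.exists_lift_exists_pull_map_eq hG hgn1 a (by simpa [ha] using hX)
  refine hgε i rfl ε hε ?_
  have hsq : g.hom (i + 1) ≫ X.map (i + 1) =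
      (eqToHom hgn ≫ V.map (i + 1) ≫ eqToHom hv1) ≫ X.map (i + 1) := by
    simp [← g.comm (i + 1) le_rfl, hgl, hGmap]
  rw [hS.pull_eq_pull_of_comp_map_eq hX le_rfl hε hsq, ← pull_pull _ (eqToHom hgn), hVε,
    pull_zero]

lemma push_map_zero_eq_zero_iff_exists_pull (hn : 0 < n) {X : ExSeq C}
    {δ : S.Ext (X.obj (n + 1)) (X.obj 0)} (hX : S.Dist X δ) {Z : C} (θ : S.Ext Z (X.obj 0)) :
    S.push (X.map 0) θ = 0 ↔ ∃ f : Z ⟶ X.obj (n + 1), S.pull f δ = θ := by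
  refine ⟨hS.exists_pull_eq_of_push_map_zero_eq_zero hn hX θ, ?_⟩
  rintro ⟨f, rfl⟩
  simp [hS.push_map_zero_eq_zero hX]

lemma push_map_one_eq_zero_iff_exists_push (hn : 0 < n) {X : ExSeq C}
    {δ : S.Ext (X.obj (n + 1)) (X.obj 0)} (hX : S.Dist X δ) {Z : C} (ε : S.Ext Z (X.obj 1)) :
    S.push (X.map 1) ε = 0 ↔ ∃ ε₀ : S.Ext Z (X.obj 0), S.push (X.map 0) ε₀ = ε := by
  have := hS.additive_right
  refine ⟨hS.exists_push_map_zero_eq_of_push_map_one_eq_zero hn hX ε, ?_⟩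
  rintro ⟨ε₀, rfl⟩
  simp [hS.map_comp_map_eq_zero hX hn]

lemma pull_map_last_eq_zero_iff_exists_push (hn : 0 < n) {X : ExSeq C}
    {δ : S.Ext (X.obj (n + 1)) (X.obj 0)} (hX : S.Dist X δ) {Z : C}
    (ε : S.Ext (X.obj (n + 1)) Z) :
    S.pull (X.map n) ε = 0 ↔ ∃ g : X.obj 0 ⟶ Z, S.push g δ = ε := by
  refine ⟨hS.exists_push_eq_of_pull_map_last_eq_zero hn hX ε, ?_⟩
  rintro ⟨g, rfl⟩
  rw [← push_pull, hS.pull_map_last_eq_zero hX, push_zero]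

lemma pull_map_eq_zero_iff_exists_pull {X : ExSeq C} {δ : S.Ext (X.obj (n + 1)) (X.obj 0)}
    (hX : S.Dist X δ) {i : ℕ} (hi : i + 1 = n) {Z : C} (ε : S.Ext (X.obj (i + 1)) Z) :
    S.pull (X.map i) ε = 0 ↔ ∃ ε' : S.Ext (X.obj (i + 2)) Z, S.pull (X.map (i + 1)) ε' = ε := by
  have := hS.additive_left
  refine ⟨hS.exists_pull_map_eq_of_pull_map_eq_zero hX hi ε, ?_⟩
  rintro ⟨ε', rfl⟩
  simp [hS.map_comp_map_eq_zero hX hi.le]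

lemma isWeakCokernel_map {X : ExSeq C} {δ : S.Ext (X.obj (n + 1)) (X.obj 0)}
    (hX : S.Dist X δ) {i : ℕ} (hi : i + 1 ≤ n) : IsWeakCokernel (X.map i) (X.map (i + 1)) :=
  ⟨hS.map_comp_map_eq_zero hX hi, fun Z h hh => (hS.ex_con_mid X δ hX i hi Z h).mp hh⟩

lemma isWeakKernel_map {X : ExSeq C} {δ : S.Ext (X.obj (n + 1)) (X.obj 0)}
    (hX : S.Dist X δ) {i : ℕ} (hi : i + 1 ≤ n) : IsWeakKernel (X.map i) (X.map (i + 1)) :=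
  ⟨hS.map_comp_map_eq_zero hX hi, fun Z h hh => (hS.ex_cov_mid X δ hX i hi Z h).mp hh⟩

end IsExangulated

theorem dist_nExangle_long_exact_general
    {n : ℕ} (hn : 0 < n) {C : Type u} [Category.{v} C] [Preadditive C]
    [HasBinaryBiproducts C]
    (S : ExData n C) (hS : IsExangulated S)
    (X : ExSeq C) (δ : S.Ext (X.obj (n + 1)) (X.obj 0)) (hX : S.Dist X δ) :
    -- exactness of C(Y,A₀) → ⋯ → C(Y,A_{n+1}) → E(Y,A₀) → E(Y,A₁) → E(Y,A₂)
    ((∀ i, i + 1 ≤ n → ∀ (Z : C) (g : Z ⟶ X.obj (i + 1)),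
        (g ≫ X.map (i + 1) = 0 ↔ ∃ h : Z ⟶ X.obj i, h ≫ X.map i = g)) ∧
      (∀ (Z : C) (g : Z ⟶ X.obj (n + 1)),
        (S.pull g δ = 0 ↔ ∃ h : Z ⟶ X.obj n, h ≫ X.map n = g)) ∧
      (∀ (Z : C) (ε : S.Ext Z (X.obj 0)),
        (S.push (X.map 0) ε = 0 ↔ ∃ f : Z ⟶ X.obj (n + 1), S.pull f δ = ε)) ∧
      (∀ (Z : C) (ε : S.Ext Z (X.obj 1)),
        (S.push (X.map 1) ε = 0 ↔ ∃ ε₀ : S.Ext Z (X.obj 0), S.push (X.map 0) ε₀ = ε))) ∧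
    -- exactness of C(A_{n+1},Y) → ⋯ → C(A₀,Y) → E(A_{n+1},Y) → E(Aₙ,Y) → E(A_{n-1},Y)
    ((∀ i, i + 1 ≤ n → ∀ (Z : C) (g : X.obj (i + 1) ⟶ Z),
        (X.map i ≫ g = 0 ↔ ∃ h : X.obj (i + 2) ⟶ Z, X.map (i + 1) ≫ h = g)) ∧
      (∀ (Z : C) (g : X.obj 0 ⟶ Z),
        (S.push g δ = 0 ↔ ∃ h : X.obj 1 ⟶ Z, X.map 0 ≫ h = g)) ∧
      (∀ (Z : C) (ε : S.Ext (X.obj (n + 1)) Z),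
        (S.pull (X.map n) ε = 0 ↔ ∃ g : X.obj 0 ⟶ Z, S.push g δ = ε)) ∧
      (∀ i, i + 1 = n → ∀ (Z : C) (ε : S.Ext (X.obj (i + 1)) Z),
        (S.pull (X.map i) ε = 0 ↔
          ∃ ε' : S.Ext (X.obj (i + 2)) Z, S.pull (X.map (i + 1)) ε' = ε))) ∧
    -- in particular: weak cokernels and weak kernels
    (∀ i, i + 1 ≤ n → IsWeakCokernel (X.map i) (X.map (i + 1)) ∧
      IsWeakKernel (X.map i) (X.map (i + 1))) := by
  refine ⟨⟨hS.ex_cov_mid X δ hX, hS.ex_cov_last X δ hX,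
      fun _ => hS.push_map_zero_eq_zero_iff_exists_pull hn hX,
      fun _ => hS.push_map_one_eq_zero_iff_exists_push hn hX⟩,
    ⟨hS.ex_con_mid X δ hX, hS.ex_con_last X δ hX,
      fun _ => hS.pull_map_last_eq_zero_iff_exists_push hn hX,
      fun _ hi _ => hS.pull_map_eq_zero_iff_exists_pull hX hi⟩,
    fun _ hi => ⟨hS.isWeakCokernel_map hX hi, hS.isWeakKernel_map hX hi⟩⟩

/-- The long exact sequences associated to a distinguished
`n`-exangle, together with the weak cokernel/weak kernel consequences. -/
theorem dist_nExangle_long_exact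
    {n : ℕ} (hn : 0 < n) {C : Type u} [Category.{v} C] [Preadditive C]
    [HasZeroObject C] [HasBinaryBiproducts C]
    (S : ExData n C) (hS : IsExangulated S)
    (X : ExSeq C) (δ : S.Ext (X.obj (n + 1)) (X.obj 0)) (hX : S.Dist X δ) :
    -- exactness of C(Y,A₀) → ⋯ → C(Y,A_{n+1}) → E(Y,A₀) → E(Y,A₁) → E(Y,A₂)
    ((∀ i, i + 1 ≤ n → ∀ (Z : C) (g : Z ⟶ X.obj (i + 1)),
        (g ≫ X.map (i + 1) = 0 ↔ ∃ h : Z ⟶ X.obj i, h ≫ X.map i = g)) ∧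
      (∀ (Z : C) (g : Z ⟶ X.obj (n + 1)),
        (S.pull g δ = 0 ↔ ∃ h : Z ⟶ X.obj n, h ≫ X.map n = g)) ∧
      (∀ (Z : C) (ε : S.Ext Z (X.obj 0)),
        (S.push (X.map 0) ε = 0 ↔ ∃ f : Z ⟶ X.obj (n + 1), S.pull f δ = ε)) ∧
      (∀ (Z : C) (ε : S.Ext Z (X.obj 1)),
        (S.push (X.map 1) ε = 0 ↔ ∃ ε₀ : S.Ext Z (X.obj 0), S.push (X.map 0) ε₀ = ε))) ∧
    -- exactness of C(A_{n+1},Y) → ⋯ → C(A₀,Y) → E(A_{n+1},Y) → E(Aₙ,Y) → E(A_{n-1},Y)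
    ((∀ i, i + 1 ≤ n → ∀ (Z : C) (g : X.obj (i + 1) ⟶ Z),
        (X.map i ≫ g = 0 ↔ ∃ h : X.obj (i + 2) ⟶ Z, X.map (i + 1) ≫ h = g)) ∧
      (∀ (Z : C) (g : X.obj 0 ⟶ Z),
        (S.push g δ = 0 ↔ ∃ h : X.obj 1 ⟶ Z, X.map 0 ≫ h = g)) ∧
      (∀ (Z : C) (ε : S.Ext (X.obj (n + 1)) Z),
        (S.pull (X.map n) ε = 0 ↔ ∃ g : X.obj 0 ⟶ Z, S.push g δ = ε)) ∧
      (∀ i, i + 1 = n → ∀ (Z : C) (ε : S.Ext (X.obj (i + 1)) Z),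
        (S.pull (X.map i) ε = 0 ↔
          ∃ ε' : S.Ext (X.obj (i + 2)) Z, S.pull (X.map (i + 1)) ε' = ε))) ∧
    -- in particular: weak cokernels and weak kernels
    (∀ i, i + 1 ≤ n → IsWeakCokernel (X.map i) (X.map (i + 1)) ∧
      IsWeakKernel (X.map i) (X.map (i + 1))) :=
  dist_nExangle_long_exact_general hn S hS X δ hX
end
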